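/- arXiv:2502.00371 — 5 statements merged into one kernel-verified Lean document; each statement's English description precedes it below -/
import Mathlib

section
/- Let p ∈ (2, ∞) and d ≥ 1. For all vectors x, y ∈ ℝ^d, one has ∫₀¹ (1 − r) |x + r·y|^{p−2} dr ≥ 3^{1−p} |x|^{p−2}. -/
open scoped RealInnerProductSpace

set_option maxHeartbeats 1000000 in
/-- Lemma 3.1 of the paper: for `p ∈ (2, ∞)` and vectors `x, y ∈ ℝ^d`,
`∫₀¹ (1 - r) |x + r y|^(p-2) dr ≥ 3^(1-p) |x|^(p-2)`. -/
theorem integral_norm_rpow_lower_bound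
    (p : ℝ) (hp : 2 < p) (d : ℕ) (hd : 1 ≤ d)
    (x y : EuclideanSpace ℝ (Fin d)) :
    (3 : ℝ) ^ (1 - p) * ‖x‖ ^ (p - 2) ≤
      ∫ r in (0:ℝ)..1, (1 - r) * ‖x + r • y‖ ^ (p - 2) := by
  set q := p - 2 with hq_def
  have hq : 0 < q := by simp only [hq_def]; linarith
  set a := ‖x‖ with ha_def
  set b := ‖y‖ with hb_def
  have ha0 : 0 ≤ a := norm_nonneg x
  have hb0 : 0 ≤ b := norm_nonneg y
  set f : ℝ → ℝ := fun r => (1 - r) * ‖x + r • y‖ ^ q with hf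
  have hfc : Continuous f := by
    apply Continuous.mul (by continuity)
    apply Continuous.rpow_const
    · continuity
    · intro r; right; exact hq.le
  have hfi : ∀ c d : ℝ, IntervalIntegrable f MeasureTheory.volume c d :=
    fun c d => hfc.intervalIntegrable c d
  have hlow1 : ∀ r : ℝ, 0 ≤ r → a - r * b ≤ ‖x + r • y‖ := by
    intro r hr
    have h1 : ‖x‖ ≤ ‖x + r • y‖ + ‖r • y‖ := by
      calc ‖x‖ = ‖(x + r • y) - r • y‖ := by rw [add_sub_cancel_right]
        _ ≤ ‖x + r • y‖ + ‖r • y‖ := norm_sub_le _ _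
    have h2 : ‖r • y‖ = r * b := by
      rw [norm_smul, Real.norm_eq_abs, abs_of_nonneg hr]
    linarith
  have hlow2 : ∀ r : ℝ, 0 ≤ r → r * b - a ≤ ‖x + r • y‖ := by
    intro r hr
    have h1 : ‖r • y‖ ≤ ‖x + r • y‖ + ‖x‖ := by
      calc ‖r • y‖ = ‖(x + r • y) - x‖ := by rw [add_sub_cancel_left]
        _ ≤ ‖x + r • y‖ + ‖x‖ := norm_sub_le _ _
    have h2 : ‖r • y‖ = r * b := by
      rw [norm_smul, Real.norm_eq_abs, abs_of_nonneg hr]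
    linarith
  -- generic subinterval lower bound
  have key : ∀ c e : ℝ, 0 ≤ c → c ≤ e → e ≤ 1 →
      (∀ r ∈ Set.Icc c e, a / 3 ≤ ‖x + r • y‖) →
      ((e - c) - (e ^ 2 - c ^ 2) / 2) * (a / 3) ^ q ≤ ∫ r in c..e, f r := by
    intro c e hc hce he1 hbound
    have hm : 0 ≤ a / 3 := by linarith
    have h1 : ∫ r in c..e, (1 - r) * (a / 3) ^ q ≤ ∫ r in c..e, f r := by
      apply intervalIntegral.integral_mono_on hce
        (Continuous.intervalIntegrable (by continuity) _ _) (hfi c e)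
      intro r hr
      have h1r : 0 ≤ 1 - r := by
        have := hr.2; linarith
      exact mul_le_mul_of_nonneg_left
        (Real.rpow_le_rpow hm (hbound r hr) hq.le) h1r
    have h2 : ∫ r in c..e, (1 - r) * (a / 3) ^ q
        = ((e - c) - (e ^ 2 - c ^ 2) / 2) * (a / 3) ^ q := by
      rw [intervalIntegral.integral_mul_const]
      congr 1
      have hii : IntervalIntegrable (fun r : ℝ => r) MeasureTheory.volume c e :=
        continuous_id.intervalIntegrable c e
      rw [intervalIntegral.integral_sub (continuous_const.intervalIntegrable c e) hii,
        integral_one, integral_id]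
    linarith [h1, h2.symm.le]
  have hnonneg : ∀ c e : ℝ, c ≤ e → e ≤ 1 → (0:ℝ) ≤ ∫ r in c..e, f r := by
    intro c e hce he1
    apply intervalIntegral.integral_nonneg hce
    intro r hr
    exact mul_nonneg (by linarith [hr.2]) (Real.rpow_nonneg (norm_nonneg _) q)
  -- rewrite RHS
  have hK0 : 0 ≤ (a / 3 : ℝ) ^ q := Real.rpow_nonneg (by linarith) q
  have h3q : (0:ℝ) < (3:ℝ) ^ q := Real.rpow_pos_of_pos (by norm_num) q
  have hrhs : (3 : ℝ) ^ (1 - p) * a ^ q = (1 / 3) * (a / 3) ^ q := by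
    have h1 : (3 : ℝ) ^ (1 - p) = ((3:ℝ) ^ q * 3)⁻¹ := by
      rw [show (1 - p) = -(q + 1) by simp only [hq_def]; ring]
      rw [Real.rpow_neg (by norm_num : (0:ℝ) ≤ 3),
        Real.rpow_add (by norm_num : (0:ℝ) < 3), Real.rpow_one]
    have h2 : (a / 3) ^ q = a ^ q / (3:ℝ) ^ q :=
      Real.div_rpow ha0 (by norm_num : (0:ℝ) ≤ 3) q
    rw [h1, h2]
    ring
  rcases le_or_gt (3 * b) (4 * a) with hcase | hcase
  · -- Case A
    have hI : ((1/2 - 0) - ((1/2) ^ 2 - 0 ^ 2) / 2) * (a / 3) ^ q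
        ≤ ∫ r in (0:ℝ)..(1/2), f r := by
      apply key 0 (1/2) le_rfl (by norm_num) (by norm_num)
      intro r hr
      have h1 := hlow1 r hr.1
      have h2 : r * b ≤ (2/3) * a := by nlinarith [hr.2, hr.1]
      linarith
    have hpos := hnonneg (1/2) 1 (by norm_num) le_rfl
    have hadd : (∫ r in (0:ℝ)..1, f r)
        = (∫ r in (0:ℝ)..(1/2), f r) + ∫ r in (1/2:ℝ)..1, f r :=
      (intervalIntegral.integral_add_adjacent_intervals (hfi _ _) (hfi _ _)).symm
    rw [hadd, hrhs]
    have hco : (1/3 : ℝ) * (a / 3) ^ q ≤ ((1/2 - 0) - ((1/2) ^ 2 - 0 ^ 2) / 2) * (a / 3) ^ q :=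
      mul_le_mul_of_nonneg_right (by norm_num) hK0
    linarith
  · -- Case B
    have hbpos : 0 < b := by nlinarith
    set s := a / b with hs_def
    have hs0 : 0 ≤ s := div_nonneg ha0 hb0
    have hs34 : s ≤ 3 / 4 := by
      rw [hs_def, div_le_iff₀ hbpos]; nlinarith
    have hsb : s * b = a := div_mul_cancel₀ a hbpos.ne'
    have hI1 : ((2*s/3 - 0) - ((2*s/3) ^ 2 - 0 ^ 2) / 2) * (a / 3) ^ q
        ≤ ∫ r in (0:ℝ)..(2*s/3), f r := by
      apply key 0 (2*s/3) le_rfl (by linarith) (by linarith)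
      intro r hr
      have h1 := hlow1 r hr.1
      have h2 : r * b ≤ (2/3) * a := by
        have := hr.2
        nlinarith [hr.1, hbpos.le]
      linarith
    have hI2 : ((1 - 4*s/3) - (1 ^ 2 - (4*s/3) ^ 2) / 2) * (a / 3) ^ q
        ≤ ∫ r in (4*s/3:ℝ)..1, f r := by
      apply key (4*s/3) 1 (by linarith) (by linarith) le_rfl
      intro r hr
      have h1 := hlow2 r (by linarith [hr.1])
      have h2 : (4/3) * a ≤ r * b := by
        have := hr.1
        nlinarith [hbpos.le]
      linarith
    have hmid := hnonneg (2*s/3) (4*s/3) (by linarith) (by linarith)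
    have hadd1 : (∫ r in (0:ℝ)..1, f r)
        = (∫ r in (0:ℝ)..(2*s/3), f r) + ∫ r in (2*s/3:ℝ)..1, f r :=
      (intervalIntegral.integral_add_adjacent_intervals (hfi _ _) (hfi _ _)).symm
    have hadd2 : (∫ r in (2*s/3:ℝ)..1, f r)
        = (∫ r in (2*s/3:ℝ)..(4*s/3), f r) + ∫ r in (4*s/3:ℝ)..1, f r :=
      (intervalIntegral.integral_add_adjacent_intervals (hfi _ _) (hfi _ _)).symm
    rw [hadd1, hadd2, hrhs]
    have hw : (1/3 : ℝ) ≤ ((2*s/3 - 0) - ((2*s/3) ^ 2 - 0 ^ 2) / 2)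
        + ((1 - 4*s/3) - (1 ^ 2 - (4*s/3) ^ 2) / 2) := by
      nlinarith [sq_nonneg (2*s - 1)]
    have hco := mul_le_mul_of_nonneg_right hw hK0
    have hsum : (((2*s/3 - 0) - ((2*s/3) ^ 2 - 0 ^ 2) / 2)
        + ((1 - 4*s/3) - (1 ^ 2 - (4*s/3) ^ 2) / 2)) * (a / 3) ^ q
        = ((2*s/3 - 0) - ((2*s/3) ^ 2 - 0 ^ 2) / 2) * (a / 3) ^ q
        + ((1 - 4*s/3) - (1 ^ 2 - (4*s/3) ^ 2) / 2) * (a / 3) ^ q := by ring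
    linarith
end

section
/- Let p ∈ (2, ∞). For all x, y ∈ ℝ^d one has |x + y|^p − |x|^p − p|x|^{p−2}⟨x, y⟩ ≥ p |y|² ∫₀¹ (1 − r) |x + r·y|^{p−2} dr, where the term |x|^{p−2}⟨x,y⟩ is interpreted as 0 when x = 0. -/
/-!
Along the line `z r = x + r • y` the function `g r = ‖z r‖ ^ p` has
`g' = p ‖z‖ ^ (p - 2) ⟪z, y⟫` and
`g'' = p (p - 2) ‖z‖ ^ (p - 4) ⟪z, y⟫ ^ 2 + p ‖y‖ ^ 2 ‖z‖ ^ (p - 2) ≥ p ‖y‖ ^ 2 ‖z‖ ^ (p - 2)`,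
and the bound is Taylor's formula with integral remainder for `g` on `[0, 1]`, with `g''`
replaced by this lower bound. Since `‖z‖ ^ (p - 4)` is singular at `z = 0`, `g''` is computed
as the derivative of `⟪G z, y⟫` for `G z = ‖z‖ ^ (p - 2) • z`, which is differentiable
everywhere because `p - 2 > 0`.
-/

open scoped RealInnerProductSpace Classical

open Asymptotics Filter Topology Set intervalIntegral

theorem integral_sub_mul_le_sub_sub_mul_deriv {f f' f'' k : ℝ → ℝ} {a b : ℝ} (hab : a ≤ b)
    (hf : ∀ r ∈ Icc a b, HasDerivAt f (f' r) r) (hf' : ∀ r ∈ Icc a b, HasDerivAt f' (f'' r) r)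
    (hk : ContinuousOn k (Icc a b)) (hkf : ∀ r ∈ Ioo a b, k r ≤ f'' r) :
    ∫ r in a..b, (b - r) * k r ≤ f b - f a - (b - a) * f' a := by
  set ψ : ℝ → ℝ := fun r ↦ f r + (b - r) * f' r - ∫ s in a..r, (b - s) * k s
  have hbk : ContinuousOn (fun s ↦ (b - s) * k s) (Icc a b) := by fun_prop
  have hψ : ∀ r ∈ Ioo a b, HasDerivAt ψ ((b - r) * (f'' r - k r)) r := by
    intro r hr
    have hr' := Ioo_subset_Icc_self hr
    have hint := integral_hasDerivAt_right
      ((hbk.mono (Icc_subset_Icc_right hr.2.le)).intervalIntegrable_of_Icc hr.1.le)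
      ((hbk.mono Ioo_subset_Icc_self).stronglyMeasurableAtFilter isOpen_Ioo r hr)
      (hbk.continuousAt (Icc_mem_nhds hr.1 hr.2))
    refine (((hf r hr').add (((hasDerivAt_id r).const_sub b).mul (hf' r hr'))).sub
      hint).congr_deriv ?_
    simp only [id]
    ring
  have hmono : MonotoneOn ψ (Icc a b) := by
    refine monotoneOn_of_deriv_nonneg (convex_Icc a b) ?_ ?_ ?_
    · have hint : ContinuousOn (fun r ↦ ∫ s in a..r, (b - s) * k s) (Icc a b) := by
        rw [← uIcc_of_le hab] at hbk ⊢
        exact continuousOn_primitive_interval (hbk.integrableOn_compact isCompact_uIcc)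
      have hfc : ContinuousOn f (Icc a b) := fun r hr ↦ (hf r hr).continuousAt.continuousWithinAt
      have hf'c : ContinuousOn f' (Icc a b) :=
        fun r hr ↦ (hf' r hr).continuousAt.continuousWithinAt
      exact (hfc.add ((continuousOn_const.sub continuousOn_id).mul hf'c)).sub hint
    · rw [interior_Icc]
      exact fun r hr ↦ (hψ r hr).differentiableAt.differentiableWithinAt
    · rw [interior_Icc]
      intro r hr
      rw [(hψ r hr).deriv]
      exact mul_nonneg (sub_nonneg.2 hr.2.le) (sub_nonneg.2 (hkf r hr))
  have := hmono (left_mem_Icc.2 hab) (right_mem_Icc.2 hab) hab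
  simp only [ψ, integral_same, sub_self, zero_mul] at this
  linarith

variable {E : Type*} [NormedAddCommGroup E] [InnerProductSpace ℝ E]

theorem hasFDerivAt_norm_rpow_of_ne_zero (q : ℝ) {x : E} (hx : x ≠ 0) :
    HasFDerivAt (fun x : E ↦ ‖x‖ ^ q) ((q * ‖x‖ ^ (q - 2)) • innerSL ℝ x) x := by
  convert ((hasStrictFDerivAt_norm_sq x).rpow_const (p := q / 2) (by simp [hx])).hasFDerivAt
    using 1
  · ext z
    rw [← Real.rpow_natCast, ← Real.rpow_mul (norm_nonneg z)]
    ring_nf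
  · rw [← Real.rpow_natCast, ← Real.rpow_mul (norm_nonneg x), ← Nat.cast_smul_eq_nsmul ℝ,
      smul_smul]
    congr 1
    ring_nf

theorem hasFDerivAt_norm_rpow_smul_self {q : ℝ} (hq : 0 < q) (x : E) :
    HasFDerivAt (fun x : E ↦ ‖x‖ ^ q • x)
      (‖x‖ ^ q • ContinuousLinearMap.id ℝ E + ((q * ‖x‖ ^ (q - 2)) • innerSL ℝ x).smulRight x)
      x := by
  -- At `x = 0` the junk value `0 ^ (q - 2)` is harmless: it multiplies `innerSL ℝ 0 = 0`.
  rcases eq_or_ne x 0 with rfl | hx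
  · simp only [norm_zero, Real.zero_rpow hq.ne', zero_smul, map_zero, smul_zero,
      ContinuousLinearMap.smulRight_zero, zero_add]
    refine .of_isLittleO ?_
    have hlim : Tendsto (fun x : E ↦ ‖x‖ ^ q) (𝓝 0) (𝓝 0) := by
      simpa [hq.ne'] using (continuous_norm.rpow_const fun _ ↦ .inr hq.le).tendsto (0 : E)
    simpa using ((isLittleO_one_iff ℝ).mpr hlim).smul_isBigO (isBigO_refl (fun x : E ↦ x) _)
  · exact (hasFDerivAt_norm_rpow_of_ne_zero q hx).smul (hasFDerivAt_id x)

theorem hasDerivAt_add_smul (x y : E) (r : ℝ) : HasDerivAt (fun r : ℝ ↦ x + r • y) y r := by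
  simpa using ((hasDerivAt_id r).smul_const y).const_add x

theorem hasDerivAt_norm_add_smul_rpow {p : ℝ} (hp : 1 < p) (x y : E) (r : ℝ) :
    HasDerivAt (fun r : ℝ ↦ ‖x + r • y‖ ^ p)
      (p * (‖x + r • y‖ ^ (p - 2) * ⟪x + r • y, y⟫)) r := by
  refine ((hasFDerivAt_norm_rpow (x + r • y) hp).comp_hasDerivAt r
    (hasDerivAt_add_smul x y r)).congr_deriv ?_
  simp only [smul_apply, coe_innerSL_apply, smul_eq_mul, mul_assoc]

theorem hasDerivAt_norm_add_smul_rpow_mul_inner {q : ℝ} (hq : 0 < q) (x y : E) (r : ℝ) :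
    HasDerivAt (fun r : ℝ ↦ ‖x + r • y‖ ^ q * ⟪x + r • y, y⟫)
      (q * ‖x + r • y‖ ^ (q - 2) * ⟪x + r • y, y⟫ ^ 2 + ‖x + r • y‖ ^ q * ‖y‖ ^ 2) r := by
  have h := ((hasFDerivAt_norm_rpow_smul_self hq (x + r • y)).comp_hasDerivAt r
    (hasDerivAt_add_smul x y r)).inner ℝ (hasDerivAt_const r y)
  simp only [Function.comp_def, real_inner_smul_left] at h
  refine h.congr_deriv ?_
  simp only [inner_zero_right, mul_zero, zero_add, add_apply,
    smul_apply, ContinuousLinearMap.id_apply,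
    ContinuousLinearMap.smulRight_apply, coe_innerSL_apply, smul_eq_mul, inner_add_left,
    real_inner_smul_left, real_inner_self_eq_norm_sq]
  ring

/-- Taylor lower bound from the proof of Proposition 3.3: for `p ∈ (2, ∞)` and
`x, y ∈ ℝ^d`, `|x+y|^p - |x|^p - p|x|^(p-2)⟨x,y⟩ ≥ p|y|² ∫₀¹ (1-r)|x+ry|^(p-2) dr`,
the term `|x|^(p-2)⟨x,y⟩` being interpreted as `0` when `x = 0`. -/
theorem norm_rpow_taylor_integral_lower_bound
    (p : ℝ) (hp : 2 < p) (d : ℕ) (x y : EuclideanSpace ℝ (Fin d)) :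
    p * ‖y‖ ^ 2 * ∫ r in (0:ℝ)..1, (1 - r) * ‖x + r • y‖ ^ (p - 2) ≤
      ‖x + y‖ ^ p - ‖x‖ ^ p -
        (if x = 0 then (0 : ℝ) else p * ‖x‖ ^ (p - 2) * ⟪x, y⟫) := by
  have hq : 0 < p - 2 := sub_pos.2 hp
  have key := integral_sub_mul_le_sub_sub_mul_deriv zero_le_one
    (fun r _ ↦ hasDerivAt_norm_add_smul_rpow (by linarith) x y r)
    (fun r _ ↦ (hasDerivAt_norm_add_smul_rpow_mul_inner hq x y r).const_mul p)
    (k := fun r ↦ p * ‖y‖ ^ 2 * ‖x + r • y‖ ^ (p - 2))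
    (Continuous.continuousOn <| continuous_const.mul <|
      (continuous_const.add (continuous_id.smul continuous_const)).norm.rpow_const
        fun _ ↦ .inr hq.le)
    (fun r _ ↦ by
      have : 0 ≤ p * ((p - 2) * ‖x + r • y‖ ^ (p - 2 - 2) * ⟪x + r • y, y⟫ ^ 2) := by
        positivity
      linarith)
  simp only [zero_smul, add_zero, one_smul, sub_zero, one_mul] at key
  have hif : (if x = 0 then (0 : ℝ) else p * ‖x‖ ^ (p - 2) * ⟪x, y⟫) =
      p * ‖x‖ ^ (p - 2) * ⟪x, y⟫ :=
    ite_eq_right_iff.2 fun hx ↦ by simp [hx]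
  calc p * ‖y‖ ^ 2 * ∫ r in (0:ℝ)..1, (1 - r) * ‖x + r • y‖ ^ (p - 2)
      = ∫ r in (0:ℝ)..1, (1 - r) * (p * ‖y‖ ^ 2 * ‖x + r • y‖ ^ (p - 2)) := by
        rw [← integral_const_mul]
        congr 1 with r
        ring
    _ ≤ _ := key
    _ = _ := by rw [hif]; ring
end

section
/- Let p ∈ (2, ∞). For all x, y ∈ ℝ^d one has |x + y|^p − |x|^p − p|x|^{p−2}⟨x, y⟩ ≥ p·3^{1−p} |y|² |x|^{p−2}, where the term |x|^{p−2}⟨x,y⟩ is interpreted as 0 when x = 0. -/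
open scoped RealInnerProductSpace Classical

/-- Tangent line inequality for `fun u => u ^ q` with real exponent `q ≥ 1`. -/
lemma rpow_tangent_le {q u v : ℝ} (hq : 1 ≤ q) (hu : 0 ≤ u) (hv : 0 < v) :
    v ^ q + q * v ^ (q - 1) * (u - v) ≤ u ^ q := by
  have hs : -1 ≤ u / v - 1 := by
    have : 0 ≤ u / v := div_nonneg hu hv.le
    linarith
  have hB := one_add_mul_self_le_rpow_one_add hs hq
  have h1 : (1 + (u / v - 1)) = u / v := by ring
  rw [h1] at hB
  have hvq : (0 : ℝ) < v ^ q := Real.rpow_pos_of_pos hv q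
  have hmul := mul_le_mul_of_nonneg_right hB hvq.le
  have hdiv : (u / v) ^ q * v ^ q = u ^ q := by
    rw [← Real.mul_rpow (div_nonneg hu hv.le) hv.le, div_mul_cancel₀]
    exact hv.ne'
  rw [hdiv] at hmul
  calc v ^ q + q * v ^ (q - 1) * (u - v)
      = (1 + q * (u / v - 1)) * v ^ q := by
        rw [Real.rpow_sub hv, Real.rpow_one]
        field_simp
    _ ≤ u ^ q := hmul

/-- Key pointwise convexity inequality from the proof of Proposition 3.3: for
`p ∈ (2, ∞)` and `x, y ∈ ℝ^d`,
`|x+y|^p - |x|^p - p|x|^(p-2)⟨x,y⟩ ≥ p 3^(1-p) |y|² |x|^(p-2)`,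
the term `|x|^(p-2)⟨x,y⟩` being interpreted as `0` when `x = 0`. -/
theorem norm_rpow_convexity_jump_lower_bound
    (p : ℝ) (hp : 2 < p) (d : ℕ) (x y : EuclideanSpace ℝ (Fin d)) :
    p * (3 : ℝ) ^ (1 - p) * ‖y‖ ^ 2 * ‖x‖ ^ (p - 2) ≤
      ‖x + y‖ ^ p - ‖x‖ ^ p -
        (if x = 0 then (0 : ℝ) else p * ‖x‖ ^ (p - 2) * ⟪x, y⟫) := by
  by_cases hx : x = 0
  · subst hx
    simp only [if_pos rfl, norm_zero, zero_add, sub_zero]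
    rw [Real.zero_rpow (by linarith : p - 2 ≠ 0), Real.zero_rpow (by linarith : p ≠ 0)]
    simpa using Real.rpow_nonneg (norm_nonneg y) p
  · rw [if_neg hx]
    have hxn : (0 : ℝ) < ‖x‖ := norm_pos_iff.mpr hx
    have hv : (0 : ℝ) < ‖x‖ ^ 2 := by positivity
    have hu : (0 : ℝ) ≤ ‖x + y‖ ^ 2 := sq_nonneg _
    have hq : (1 : ℝ) ≤ p / 2 := by linarith
    have key := rpow_tangent_le hq hu hv
    -- rewrite rpow of squares
    have e1 : (‖x + y‖ ^ 2 : ℝ) ^ (p / 2) = ‖x + y‖ ^ p := by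
      rw [← Real.rpow_natCast ‖x + y‖ 2, ← Real.rpow_mul (norm_nonneg _)]
      congr 1; push_cast; ring
    have e2 : (‖x‖ ^ 2 : ℝ) ^ (p / 2) = ‖x‖ ^ p := by
      rw [← Real.rpow_natCast ‖x‖ 2, ← Real.rpow_mul (norm_nonneg _)]
      congr 1; push_cast; ring
    have e3 : (‖x‖ ^ 2 : ℝ) ^ (p / 2 - 1) = ‖x‖ ^ (p - 2) := by
      rw [← Real.rpow_natCast ‖x‖ 2, ← Real.rpow_mul (norm_nonneg _)]
      congr 1; push_cast; ring
    have e4 : (‖x + y‖ ^ 2 : ℝ) - ‖x‖ ^ 2 = 2 * ⟪x, y⟫ + ‖y‖ ^ 2 := by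
      rw [@norm_add_sq_real]
      ring
    rw [e1, e2, e3, e4] at key
    -- key : ‖x‖^p + p/2 * ‖x‖^(p-2) * (2⟪x,y⟫ + ‖y‖^2) ≤ ‖x+y‖^p
    have h3 : (3 : ℝ) ^ (1 - p) ≤ 1 / 2 := by
      have : (3 : ℝ) ^ (1 - p) ≤ (3 : ℝ) ^ (-1 : ℝ) := by
        apply Real.rpow_le_rpow_of_exponent_le (by norm_num) (by linarith)
      have h31 : (3 : ℝ) ^ (-1 : ℝ) = 1 / 3 := by
        rw [Real.rpow_neg_one]; norm_num
      linarith [h31 ▸ this]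
    have hxp : (0 : ℝ) ≤ ‖x‖ ^ (p - 2) := Real.rpow_nonneg (norm_nonneg _) _
    nlinarith [sq_nonneg ‖y‖, mul_nonneg (mul_nonneg hxp (sq_nonneg ‖y‖)) (by linarith : (0:ℝ) ≤ p)]
end

section
/- Let p ∈ (1, 2) and ε > 0, and define ν_ε(y) := (|y|² + ε²)^{1/2} for y ∈ ℝ^d. Then for all x, u ∈ ℝ^d one has ν_ε(x+u)^p − ν_ε(x)^p − p ν_ε(x)^{p−2} ⟨x, u⟩ ≥ p(p−1) |u|² ∫₀¹ (1 − r) ν_ε(x + r·u)^{p−2} dr. -/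
open scoped RealInnerProductSpace

/-!
Along the segment `r ↦ y = x + r • u`, the function `g r = ν_ε(y)^p` satisfies
`g 1 - g 0 - g' 0 = ∫₀¹ (1 - r) g'' r dr` (Taylor's formula with integral remainder), where
`g'' = p (p - 2) ν_ε(y)^(p-4) ⟪y, u⟫² + p ν_ε(y)^(p-2) ‖u‖²`.
Since `p (p - 2) ≤ 0` and `⟪y, u⟫² ≤ ‖y‖² ‖u‖² ≤ ν_ε(y)² ‖u‖²`,
this is at least `p (p - 1) ν_ε(y)^(p-2) ‖u‖²`.
-/

theorem integral_one_sub_mul_eq_of_hasDerivAt {g g' g'' : ℝ → ℝ}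
    (hg : ∀ r ∈ Set.uIcc (0 : ℝ) 1, HasDerivAt g (g' r) r)
    (hg' : ∀ r ∈ Set.uIcc (0 : ℝ) 1, HasDerivAt g' (g'' r) r)
    (hint : IntervalIntegrable g'' MeasureTheory.volume 0 1) :
    ∫ r in (0 : ℝ)..1, (1 - r) * g'' r = g 1 - g 0 - g' 0 := by
  have hF : ∀ r ∈ Set.uIcc (0 : ℝ) 1,
      HasDerivAt (fun t => (1 - t) * g' t + g t) ((1 - r) * g'' r) r := by
    intro r hr
    refine ((((hasDerivAt_id' r).const_sub 1).mul (hg' r hr)).add (hg r hr)).congr_deriv ?_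
    ring
  rw [intervalIntegral.integral_eq_sub_of_hasDerivAt hF
    (hint.continuousOn_mul (by fun_prop))]
  ring

theorem integral_one_sub_mul_le_of_le_deriv {g g' g'' h : ℝ → ℝ}
    (hg : ∀ r ∈ Set.uIcc (0 : ℝ) 1, HasDerivAt g (g' r) r)
    (hg' : ∀ r ∈ Set.uIcc (0 : ℝ) 1, HasDerivAt g' (g'' r) r)
    (hg''int : IntervalIntegrable g'' MeasureTheory.volume 0 1)
    (hint : IntervalIntegrable h MeasureTheory.volume 0 1)
    (hle : ∀ r ∈ Set.Icc (0 : ℝ) 1, h r ≤ g'' r) :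
    ∫ r in (0 : ℝ)..1, (1 - r) * h r ≤ g 1 - g 0 - g' 0 := by
  rw [← integral_one_sub_mul_eq_of_hasDerivAt hg hg' hg''int]
  refine intervalIntegral.integral_mono_on zero_le_one (hint.continuousOn_mul (by fun_prop))
    (hg''int.continuousOn_mul (by fun_prop)) fun r hr => ?_
  exact mul_le_mul_of_nonneg_left (hle r hr) (sub_nonneg.2 hr.2)

theorem hasDerivAt_add_smul_s9 {F : Type*} [NormedAddCommGroup F] [NormedSpace ℝ F] (x u : F)
    (r : ℝ) : HasDerivAt (fun t : ℝ => x + t • u) u r := by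
  simpa using ((hasDerivAt_id r).smul_const u).const_add x

section RegNorm

variable {E : Type*} [NormedAddCommGroup E] {ε : ℝ}

/-- The paper's `ν_ε`. -/
noncomputable def regNorm (ε : ℝ) (y : E) : ℝ := √(‖y‖ ^ 2 + ε ^ 2)

theorem regNorm_pos (hε : ε ≠ 0) (y : E) : 0 < regNorm ε y :=
  Real.sqrt_pos.2 (by positivity)

variable [InnerProductSpace ℝ E]

theorem inner_sq_le_regNorm_sq_mul (y u : E) : ⟪y, u⟫ ^ 2 ≤ regNorm ε y ^ 2 * ‖u‖ ^ 2 := by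
  have hy : ‖y‖ ≤ regNorm ε y :=
    Real.le_sqrt_of_sq_le (le_add_of_nonneg_right (sq_nonneg ε))
  rw [← mul_pow, ← sq_abs]
  exact pow_le_pow_left₀ (abs_nonneg _)
    ((abs_real_inner_le_norm y u).trans (mul_le_mul_of_nonneg_right hy (norm_nonneg u))) 2

theorem hasDerivAt_regNorm_add_smul_rpow (hε : ε ≠ 0) (s : ℝ) (x u : E) (r : ℝ) :
    HasDerivAt (fun t : ℝ => regNorm ε (x + t • u) ^ s)
      (s * regNorm ε (x + r • u) ^ (s - 2) * ⟪x + r • u, u⟫) r := by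
  have hν : HasDerivAt (fun t : ℝ => regNorm ε (x + t • u))
      (2 * ⟪x + r • u, u⟫ / (2 * regNorm ε (x + r • u))) r :=
    ((hasDerivAt_add_smul_s9 x u r).norm_sq.add_const (ε ^ 2)).sqrt (by positivity)
  have hpos := regNorm_pos hε (x + r • u)
  have hpow : regNorm ε (x + r • u) ^ (s - 1) =
      regNorm ε (x + r • u) ^ (s - 2) * regNorm ε (x + r • u) := by
    rw [← Real.rpow_add_one hpos.ne']
    ring_nf
  refine (hν.rpow_const (p := s) (Or.inl hpos.ne')).congr_deriv ?_
  rw [hpow]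
  field_simp

theorem continuous_regNorm_add_smul_rpow (hε : ε ≠ 0) (s : ℝ) (x u : E) :
    Continuous fun t : ℝ => regNorm ε (x + t • u) ^ s :=
  continuous_iff_continuousAt.2 fun r =>
    (hasDerivAt_regNorm_add_smul_rpow hε s x u r).continuousAt

theorem hasDerivAt_inner_add_smul (x u : E) (r : ℝ) :
    HasDerivAt (fun t : ℝ => ⟪x + t • u, u⟫) (‖u‖ ^ 2) r := by
  simpa [real_inner_self_eq_norm_sq] using
    (hasDerivAt_add_smul_s9 x u r).inner ℝ (hasDerivAt_const r u)

theorem hasDerivAt_deriv_regNorm_add_smul_rpow (hε : ε ≠ 0) (p : ℝ) (x u : E) (r : ℝ) :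
    HasDerivAt (fun t : ℝ => p * regNorm ε (x + t • u) ^ (p - 2) * ⟪x + t • u, u⟫)
      (p * (p - 2) * regNorm ε (x + r • u) ^ (p - 4) * ⟪x + r • u, u⟫ ^ 2 +
        p * regNorm ε (x + r • u) ^ (p - 2) * ‖u‖ ^ 2) r := by
  refine (((hasDerivAt_regNorm_add_smul_rpow hε (p - 2) x u r).const_mul p).mul
    (hasDerivAt_inner_add_smul x u r)).congr_deriv ?_
  rw [show p - 2 - 2 = p - 4 by ring]
  ring

theorem le_regNorm_rpow_hessian {p : ℝ} (hp0 : 0 ≤ p) (hp2 : p ≤ 2) (hε : ε ≠ 0)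
    (y u : E) :
    p * (p - 1) * ‖u‖ ^ 2 * regNorm ε y ^ (p - 2) ≤
      p * (p - 2) * regNorm ε y ^ (p - 4) * ⟪y, u⟫ ^ 2 +
        p * regNorm ε y ^ (p - 2) * ‖u‖ ^ 2 := by
  have hpos := regNorm_pos hε y
  have hpow : regNorm ε y ^ (p - 4) * regNorm ε y ^ 2 = regNorm ε y ^ (p - 2) := by
    rw [← Real.rpow_natCast, ← Real.rpow_add hpos]
    norm_num [sub_add]
  have hcoef : p * (p - 2) * regNorm ε y ^ (p - 4) ≤ 0 :=
    mul_nonpos_of_nonpos_of_nonneg (mul_nonpos_of_nonneg_of_nonpos hp0 (by linarith))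
      (Real.rpow_nonneg hpos.le _)
  have hCS := mul_le_mul_of_nonpos_left (inner_sq_le_regNorm_sq_mul (ε := ε) y u) hcoef
  calc p * (p - 1) * ‖u‖ ^ 2 * regNorm ε y ^ (p - 2)
      = p * (p - 2) * (regNorm ε y ^ (p - 4) * regNorm ε y ^ 2) * ‖u‖ ^ 2 +
          p * regNorm ε y ^ (p - 2) * ‖u‖ ^ 2 := by rw [hpow]; ring
    _ ≤ _ := by linarith

end RegNorm

/-- Taylor inequality with integral remainder from the proof of Lemma 3.5:
for `p ∈ (1, 2)`, `ε > 0`, `ν_ε(y) = (|y|² + ε²)^(1/2)` and all `x, u ∈ ℝ^d`,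
`ν_ε(x+u)^p - ν_ε(x)^p - p ν_ε(x)^(p-2)⟨x,u⟩ ≥ p(p-1)|u|² ∫₀¹ (1-r) ν_ε(x+ru)^(p-2) dr`. -/
theorem nu_eps_taylor_integral_lower_bound
    (p : ℝ) (hp1 : 1 < p) (hp2 : p < 2) (ε : ℝ) (hε : 0 < ε) (d : ℕ)
    (x u : EuclideanSpace ℝ (Fin d)) :
    p * (p - 1) * ‖u‖ ^ 2 *
        ∫ r in (0:ℝ)..1, (1 - r) * Real.sqrt (‖x + r • u‖ ^ 2 + ε ^ 2) ^ (p - 2) ≤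
      Real.sqrt (‖x + u‖ ^ 2 + ε ^ 2) ^ p - Real.sqrt (‖x‖ ^ 2 + ε ^ 2) ^ p -
        p * Real.sqrt (‖x‖ ^ 2 + ε ^ 2) ^ (p - 2) * ⟪x, u⟫ := by
  have hν2 := continuous_regNorm_add_smul_rpow hε.ne' (p - 2) x u
  have hν4 := continuous_regNorm_add_smul_rpow hε.ne' (p - 4) x u
  have htaylor := integral_one_sub_mul_le_of_le_deriv
    (h := fun t => p * (p - 1) * ‖u‖ ^ 2 * regNorm ε (x + t • u) ^ (p - 2))
    (fun r _ => hasDerivAt_regNorm_add_smul_rpow hε.ne' p x u r)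
    (fun r _ => hasDerivAt_deriv_regNorm_add_smul_rpow hε.ne' p x u r)
    (Continuous.intervalIntegrable (by fun_prop) 0 1)
    (Continuous.intervalIntegrable (by fun_prop) 0 1)
    (fun r _ => le_regNorm_rpow_hessian (by linarith) hp2.le hε.ne' _ u)
  simp only [one_smul, zero_smul, add_zero] at htaylor
  rw [← intervalIntegral.integral_const_mul]
  refine Eq.trans_le (intervalIntegral.integral_congr fun r _ => ?_) htaylor
  dsimp only [regNorm]
  ring
end

section
/- Let p ∈ (1, 2) and let x, u ∈ ℝ^d be such that max(|x|, |x+u|) > 0. Then |x + u|^p − |x|^p − p |x|^{p−2} ⟨x, u⟩ · 1_{x ≠ 0} ≥ (p(p−1)/2) |u|² (max(|x|, |x+u|))^{p−2}, where the indicator 1_{x ≠ 0} means that the third term on the left-hand side is 0 when x = 0. -/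
open scoped RealInnerProductSpace Classical

/-!
Write `a = ‖x‖`, `b = ‖x + u‖`, `M = max a b` and `K = p(p-1)/2 · M^(p-2)`. Since `p ≤ 2`, the
function `t ↦ t^p - K t²` has second derivative `p(p-1)(t^(p-2) - M^(p-2)) ≥ 0` on `(0, M)`, so it
is convex on `[0, M]`, and its tangent line at `a` gives the one-dimensional bound
`b^p - a^p - p a^(p-1) (b - a) ≥ K (b - a)²`. By polarization `⟪x, u⟫ = (b² - a² - ‖u‖²)/2`, the
vector inequality is this bound plus `(p/2) a^(p-2) (‖u‖² - (b - a)²)`, which dominates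
`K (‖u‖² - (b - a)²)` because `|b - a| ≤ ‖u‖` and `(p/2) a^(p-2) ≥ K`.
-/

open Set

theorem ConvexOn.add_mul_sub_le_of_hasDerivAt {S : Set ℝ} {f : ℝ → ℝ} {f' x y : ℝ}
    (hfc : ConvexOn ℝ S f) (hx : x ∈ S) (hy : y ∈ S) (hf : HasDerivAt f f' x) :
    f x + f' * (y - x) ≤ f y := by
  rcases lt_trichotomy x y with hxy | rfl | hyx
  · have h := hfc.le_slope_of_hasDerivAt hx hy hxy hf
    rw [slope_def_field, le_div_iff₀ (sub_pos.2 hxy)] at h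
    linarith
  · simp
  · have h := hfc.slope_le_of_hasDerivAt hy hx hyx hf
    rw [slope_def_field, div_le_iff₀ (sub_pos.2 hyx)] at h
    linarith

theorem convexOn_rpow_sub_mul_sq {p M : ℝ} (hp1 : 1 ≤ p) (hp2 : p ≤ 2) :
    ConvexOn ℝ (Icc 0 M) fun t => t ^ p - p * (p - 1) / 2 * M ^ (p - 2) * t ^ 2 := by
  refine convexOn_of_hasDerivWithinAt2_nonneg (convex_Icc 0 M)
    (f' := fun t => p * t ^ (p - 1) - p * (p - 1) * M ^ (p - 2) * t)
    (f'' := fun t => p * (p - 1) * t ^ (p - 2) - p * (p - 1) * M ^ (p - 2)) ?_ ?_ ?_ ?_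
  · exact ((Real.continuous_rpow_const (by linarith)).sub (by fun_prop)).continuousOn
  all_goals
    rw [interior_Icc]
    rintro t ⟨ht0, htM⟩
  · refine HasDerivAt.hasDerivWithinAt ?_
    convert (Real.hasDerivAt_rpow_const (Or.inr hp1)).fun_sub
      ((hasDerivAt_pow 2 t).const_mul (p * (p - 1) / 2 * M ^ (p - 2))) using 1
    push_cast
    ring
  · refine HasDerivAt.hasDerivWithinAt ?_
    convert ((Real.hasDerivAt_rpow_const (p := p - 1) (Or.inl ht0.ne')).const_mul p).fun_sub
      ((hasDerivAt_id' t).const_mul (p * (p - 1) * M ^ (p - 2))) using 1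
    ring_nf
  · have hM : M ^ (p - 2) ≤ t ^ (p - 2) := Real.rpow_le_rpow_of_nonpos ht0 htM.le (by linarith)
    have hp : 0 ≤ p * (p - 1) := by nlinarith
    nlinarith

theorem mul_sq_le_rpow_sub_rpow_sub_mul {p a b : ℝ} (hp1 : 1 ≤ p) (hp2 : p ≤ 2) (ha : 0 < a)
    (hb : 0 ≤ b) :
    p * (p - 1) / 2 * max a b ^ (p - 2) * (b - a) ^ 2 ≤
      b ^ p - a ^ p - p * a ^ (p - 1) * (b - a) := by
  have hderiv := (Real.hasDerivAt_rpow_const (Or.inr hp1)).fun_sub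
    ((hasDerivAt_pow 2 a).const_mul (p * (p - 1) / 2 * max a b ^ (p - 2)))
  have htangent := (convexOn_rpow_sub_mul_sq hp1 hp2).add_mul_sub_le_of_hasDerivAt
    ⟨ha.le, le_max_left a b⟩ ⟨hb, le_max_right a b⟩ hderiv
  linear_combination htangent

theorem mul_sq_mul_le_norm_add_rpow_sub {E : Type*} [NormedAddCommGroup E]
    [InnerProductSpace ℝ E] {p : ℝ} (hp1 : 1 ≤ p) (hp2 : p ≤ 2) (x u : E) :
    p * (p - 1) / 2 * ‖u‖ ^ 2 * max ‖x‖ ‖x + u‖ ^ (p - 2) ≤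
      ‖x + u‖ ^ p - ‖x‖ ^ p - p * ‖x‖ ^ (p - 2) * ⟪x, u⟫ := by
  rcases eq_or_ne x 0 with rfl | hx
  · have hpow : ‖u‖ ^ 2 * ‖u‖ ^ (p - 2) = ‖u‖ ^ p := by
      rw [← Real.rpow_natCast, ← Real.rpow_add' (norm_nonneg u) (by push_cast; linarith)]
      norm_num
    have hcoef : p * (p - 1) / 2 ≤ 1 := by nlinarith
    simp only [norm_zero, zero_add, max_eq_right (norm_nonneg u), inner_zero_left, mul_zero,
      Real.zero_rpow (by linarith : p ≠ 0), sub_zero]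
    rw [mul_assoc, hpow]
    exact mul_le_of_le_one_left (by positivity) hcoef
  set a := ‖x‖
  set b := ‖x + u‖
  set M := max a b
  have ha : 0 < a := norm_pos_iff.2 hx
  have hinner : ⟪x, u⟫ = (b ^ 2 - a ^ 2 - ‖u‖ ^ 2) / 2 := by
    linarith [norm_add_sq_real x u]
  have hsq : (b - a) ^ 2 ≤ ‖u‖ ^ 2 := by
    simpa only [sq_abs, add_sub_cancel_left] using
      pow_le_pow_left₀ (abs_nonneg _) (abs_norm_sub_norm_le (x + u) x) 2
  have hcoef : p * (p - 1) / 2 * M ^ (p - 2) ≤ p / 2 * a ^ (p - 2) := calc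
    p * (p - 1) / 2 * M ^ (p - 2) ≤ p / 2 * M ^ (p - 2) := by gcongr; nlinarith
    _ ≤ p / 2 * a ^ (p - 2) := mul_le_mul_of_nonneg_left
      (Real.rpow_le_rpow_of_nonpos ha (le_max_left a b) (by linarith)) (by linarith)
  have hpow : a ^ (p - 1) = a ^ (p - 2) * a := by
    rw [← Real.rpow_add_one ha.ne']
    ring_nf
  have h1d := mul_sq_le_rpow_sub_rpow_sub_mul hp1 hp2 ha (norm_nonneg (x + u))
  rw [hpow] at h1d
  rw [hinner]
  linear_combination h1d + mul_le_mul_of_nonneg_right hcoef (sub_nonneg.2 hsq)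

theorem norm_rpow_jump_lower_bound_p_lt_two_general
    (p : ℝ) (hp1 : 1 < p) (hp2 : p < 2) (d : ℕ)
    (x u : EuclideanSpace ℝ (Fin d)) :
    p * (p - 1) / 2 * ‖u‖ ^ 2 * (max ‖x‖ ‖x + u‖) ^ (p - 2) ≤
      ‖x + u‖ ^ p - ‖x‖ ^ p -
        (if x = 0 then (0 : ℝ) else p * ‖x‖ ^ (p - 2) * ⟪x, u⟫) := by
  -- at `x = 0` the junk value `0 ^ (p - 2)` is multiplied by `⟪0, u⟫ = 0`
  rw [ite_eq_right_iff.2 fun hx => by simp [hx]]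
  exact mul_sq_mul_le_norm_add_rpow_sub hp1.le hp2.le x u

/-- Deterministic pointwise inequality underlying Lemma 3.5: for `p ∈ (1, 2)`
and `x, u ∈ ℝ^d` with `max(|x|, |x+u|) > 0`,
`|x+u|^p - |x|^p - p|x|^(p-2)⟨x,u⟩·1_{x ≠ 0} ≥ (p(p-1)/2)|u|² (max(|x|,|x+u|))^(p-2)`,
where the indicator means the third term on the left is `0` when `x = 0`. -/
theorem norm_rpow_jump_lower_bound_p_lt_two
    (p : ℝ) (hp1 : 1 < p) (hp2 : p < 2) (d : ℕ)
    (x u : EuclideanSpace ℝ (Fin d)) (h : 0 < max ‖x‖ ‖x + u‖) :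
    p * (p - 1) / 2 * ‖u‖ ^ 2 * (max ‖x‖ ‖x + u‖) ^ (p - 2) ≤
      ‖x + u‖ ^ p - ‖x‖ ^ p -
        (if x = 0 then (0 : ℝ) else p * ‖x‖ ^ (p - 2) * ⟪x, u⟫) :=
  norm_rpow_jump_lower_bound_p_lt_two_general p hp1 hp2 d x u
end
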